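/- If the modular cocycle of a locally finite connected graph is identically 1 (i.e., the graph is unimodular in the sense that card(G_x·y) = card(G_y·x) for all vertices x, y), then the automorphism group G of the graph is a unimodular locally compact group. -/

import Mathlib

/-! Write `K_x` for the (compact open) stabilizer of a vertex `x`. Since `K_x ∩ K_y` is the
stabilizer of `y` in `K_x`, a left Haar measure satisfies `m K_x = |K_x • y| * m (K_x ∩ K_y)`, so
the cocycle condition gives `m K_x = m K_y` for all vertices. The right translate `K_x g⁻¹` is a
left translate of `g K_x g⁻¹ = K_{g x}`, hence the right-translated Haar measure agrees with `m`
on `K_x` and its Haar scalar factor is `1`. A connected locally finite graph has countably many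
vertices, so `G` is covered by countably many cosets of `K_x`; in a σ-compact group two left Haar
measures that agree on relatively compact sets coincide. -/

open MulAction MeasureTheory Set

namespace SimpleGraph

variable {V : Type*}

theorem finite_setOf_exists_walk_length_eq (Γ : SimpleGraph V) [∀ v, Finite (Γ.neighborSet v)]
    (x : V) (n : ℕ) : {v | ∃ p : Γ.Walk v x, p.length = n}.Finite := by
  induction n with
  | zero =>
    refine (finite_singleton x).subset ?_
    rintro v ⟨p, hp⟩
    exact Walk.eq_of_length_eq_zero hp
  | succ n ih =>
    refine (ih.biUnion fun w _ => (Γ.neighborSet w).toFinite).subset ?_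
    rintro v ⟨_ | ⟨hvw, q⟩, hp⟩
    · simp at hp
    · exact mem_biUnion ⟨q, by simpa using hp⟩ hvw.symm

theorem Preconnected.countable {Γ : SimpleGraph V} [∀ v, Finite (Γ.neighborSet v)]
    (hΓ : Γ.Preconnected) : Countable V := by
  cases isEmpty_or_nonempty V with
  | inl _ => infer_instance
  | inr hV =>
    obtain ⟨x⟩ := hV
    have hcover : ⋃ n : ℕ, {v | ∃ p : Γ.Walk v x, p.length = n} = univ :=
      iUnion_eq_univ_iff.2 fun v => ⟨_, (hΓ v x).some, rfl⟩
    rw [← countable_univ_iff, ← hcover]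
    exact countable_iUnion fun n => (Γ.finite_setOf_exists_walk_length_eq x n).countable

end SimpleGraph

namespace MulAction

variable {G V : Type*} [Group G] [MulAction G V]

open scoped Pointwise in
theorem setOf_smul_eq_smul (g : G) (x : V) :
    {h : G | h • x = g • x} = g • (stabilizer G x : Set G) := by
  ext h
  rw [mem_ofPred_eq, ← inv_smul_eq_iff, smul_smul, mem_smul_set_iff_inv_smul_mem, smul_eq_mul,
    SetLike.mem_coe, mem_stabilizer_iff]

theorem preimage_mul_right_stabilizer (g : G) (x : V) :
    (· * g) ⁻¹' (stabilizer G x : Set G) = (g * ·) ⁻¹' (stabilizer G (g • x) : Set G) := by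
  ext h
  simp only [mem_preimage, SetLike.mem_coe, mem_stabilizer_iff, mul_smul, smul_left_cancel_iff]

theorem sigmaCompactSpace_of_isCompact_stabilizer [TopologicalSpace G] [ContinuousMul G]
    [Countable V] {x : V} (hx : IsCompact (stabilizer G x : Set G)) : SigmaCompactSpace G := by
  refine SigmaCompactSpace.of_countable (range fun v : V => {h : G | h • x = v})
    (countable_range _) ?_ (sUnion_range _ ▸ iUnion_eq_univ_iff.2 fun h => ⟨_, rfl⟩)
  rintro _ ⟨v, rfl⟩
  by_cases hv : v ∈ orbit G x
  · obtain ⟨g, rfl⟩ := hv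
    simp only [setOf_smul_eq_smul]
    exact hx.smul g
  · convert isCompact_empty
    exact eq_empty_of_forall_notMem fun h hh => hv ⟨h, hh⟩

end MulAction

section MeasurableMul

variable {G : Type*} [Group G] [MeasurableSpace G] [MeasurableMul G]

instance Subgroup.instMeasurableMul (H : Subgroup G) : MeasurableMul H where
  measurable_const_mul g := ((measurable_const_mul (g : G)).comp measurable_subtype_coe).subtype_mk
  measurable_mul_const g := ((measurable_mul_const (g : G)).comp measurable_subtype_coe).subtype_mk

namespace MeasureTheory.Measure

theorem isMulLeftInvariant_comap_subtype (μ : Measure G) [μ.IsMulLeftInvariant]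
    {H : Subgroup G} (hH : MeasurableSet (H : Set G)) :
    (μ.comap ((↑) : H → G)).IsMulLeftInvariant := by
  have hemb : MeasurableEmbedding ((↑) : H → G) := .subtype_coe hH
  refine ⟨fun g => ext fun A hA => ?_⟩
  have himage : ((↑) : H → G) '' ((g * ·) ⁻¹' A) = ((g : G) * ·) ⁻¹' ((↑) '' A) := by
    ext x
    constructor
    · rintro ⟨y, hy, rfl⟩
      exact ⟨g * y, hy, rfl⟩
    · rintro ⟨y, hy, hyx⟩
      refine ⟨g⁻¹ * y, by simpa using hy, ?_⟩
      simp [hyx]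
  rw [map_apply (measurable_const_mul g) hA, hemb.comap_apply, hemb.comap_apply, himage,
    measure_preimage_mul]

variable {V : Type*} [MulAction G V]

theorem measure_subgroup_eq_card_orbit_mul (μ : Measure G) [μ.IsMulLeftInvariant]
    {H : Subgroup G} (hH : MeasurableSet (H : Set G)) {y : V}
    (hy : MeasurableSet (stabilizer G y : Set G)) (hfin : (orbit H y).Finite) :
    μ H = Nat.card (orbit H y) * μ ((H : Set G) ∩ stabilizer G y) := by
  have hemb : MeasurableEmbedding ((↑) : H → G) := .subtype_coe hH
  have := isMulLeftInvariant_comap_subtype μ hH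
  have hindex : (stabilizer H y).index = Nat.card (orbit H y) := by
    rw [index_stabilizer, Nat.card_coe_set_eq]
  have : (stabilizer H y).FiniteIndex := ⟨by
    rw [hindex, Nat.card_coe_set_eq]
    exact ((Set.ncard_pos hfin).2 ⟨y, mem_orbit_self y⟩).ne'⟩
  have hK : MeasurableSet (stabilizer H y : Set H) := measurable_subtype_coe hy
  have key := (stabilizer H y).index_mul_measure hK (μ.comap (↑))
  have himage : ((↑) : H → G) '' stabilizer H y = (H : Set G) ∩ stabilizer G y := by
    ext x
    simp [and_comm]
  rwa [hemb.comap_apply, hemb.comap_apply, image_univ, Subtype.range_coe, hindex, himage,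
    eq_comm] at key

theorem measure_stabilizer_eq_of_card_orbit_eq (μ : Measure G) [μ.IsMulLeftInvariant] {x y : V}
    (hx : MeasurableSet (stabilizer G x : Set G)) (hy : MeasurableSet (stabilizer G y : Set G))
    (hxy : (orbit (stabilizer G x) y).Finite) (hyx : (orbit (stabilizer G y) x).Finite)
    (hcard : Nat.card (orbit (stabilizer G x) y) = Nat.card (orbit (stabilizer G y) x)) :
    μ (stabilizer G x) = μ (stabilizer G y) := by
  rw [measure_subgroup_eq_card_orbit_mul μ hx hy hxy,
    measure_subgroup_eq_card_orbit_mul μ hy hx hyx, hcard, inter_comm]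

end MeasureTheory.Measure

end MeasurableMul

namespace MeasureTheory.Measure

theorem ext_of_isCompact_closure {X : Type*} [TopologicalSpace X] [R1Space X]
    [SigmaCompactSpace X] [MeasurableSpace X] {μ ν : Measure X}
    (h : ∀ s, IsCompact (closure s) → μ s = ν s) : μ = ν := by
  ext s -
  have hmono : Monotone fun n => s ∩ compactCovering X n :=
    fun _ _ hmn => inter_subset_inter_right s (compactCovering_subset X hmn)
  rw [← inter_univ s, ← iUnion_compactCovering, inter_iUnion, hmono.measure_iUnion,
    hmono.measure_iUnion]
  exact iSup_congr fun n =>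
    h _ ((isCompact_compactCovering X n).closure_of_subset inter_subset_right)

section TopologicalGroup

variable {G : Type*} [Group G] [TopologicalSpace G] [IsTopologicalGroup G]
  [LocallyCompactSpace G] [MeasurableSpace G] [BorelSpace G]

theorem haarScalarFactor_eq_one_of_measure_eq (μ' μ : Measure G) [μ.IsHaarMeasure]
    [IsFiniteMeasureOnCompacts μ'] [μ'.IsMulLeftInvariant] {K : Set G} (hK : IsCompact K)
    (hKo : IsOpen K) (hKne : K.Nonempty) (h : μ' K = μ K) : haarScalarFactor μ' μ = 1 := by
  have hscale := measure_isMulInvariant_eq_smul_of_isCompact_closure μ' μ hK.closure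
  rw [h, ENNReal.smul_def, smul_eq_mul] at hscale
  exact_mod_cast
    (ENNReal.mul_eq_right (hKo.measure_ne_zero μ hKne) hK.measure_lt_top.ne).1 hscale.symm

theorem isMulRightInvariant_of_measure_preimage_mul_right [SigmaCompactSpace G] (μ : Measure G)
    [μ.IsHaarMeasure] {K : Set G} (hK : IsCompact K) (hKo : IsOpen K) (hKne : K.Nonempty)
    (h : ∀ g, μ ((· * g) ⁻¹' K) = μ K) : μ.IsMulRightInvariant := by
  refine ⟨fun g => ext_of_isCompact_closure fun s hs => ?_⟩
  have hfactor : haarScalarFactor (map (· * g) μ) μ = 1 :=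
    haarScalarFactor_eq_one_of_measure_eq _ μ hK hKo hKne
      (by rw [map_apply (measurable_mul_const g) hKo.measurableSet, h])
  rw [measure_isMulInvariant_eq_smul_of_isCompact_closure _ μ hs, hfactor, one_smul]

end TopologicalGroup

end MeasureTheory.Measure

theorem unimodular_graph_implies_unimodular_group_general {G V : Type*} [Group G]
    [TopologicalSpace G] [IsTopologicalGroup G] [LocallyCompactSpace G]
    [MeasurableSpace G] [BorelSpace G]
    (m : Measure G) [m.IsHaarMeasure]
    (Γ : SimpleGraph V) [∀ v, Fintype (Γ.neighborSet v)] (hconn : Γ.Connected)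
    [MulAction G V]
    (hcompact : ∀ x : V, IsCompact (MulAction.stabilizer G x : Set G))
    (hopen : ∀ x : V, IsOpen (MulAction.stabilizer G x : Set G))
    (horbfin : ∀ x y : V, (MulAction.orbit (MulAction.stabilizer G x) y).Finite)
    (huni : ∀ x y : V,
      Nat.card (MulAction.orbit (MulAction.stabilizer G x) y) =
        Nat.card (MulAction.orbit (MulAction.stabilizer G y) x)) :
    m.IsMulRightInvariant := by
  have : Countable V := hconn.preconnected.countable
  obtain ⟨x⟩ := hconn.nonempty
  have : SigmaCompactSpace G := sigmaCompactSpace_of_isCompact_stabilizer (hcompact x)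
  refine m.isMulRightInvariant_of_measure_preimage_mul_right (hcompact x) (hopen x)
    ⟨1, one_mem _⟩ fun g => ?_
  rw [preimage_mul_right_stabilizer, measure_preimage_mul]
  exact m.measure_stabilizer_eq_of_card_orbit_eq (hopen _).measurableSet (hopen x).measurableSet
    (horbfin _ _) (horbfin _ _) (huni _ _)

/-- If the modular cocycle of a locally finite connected graph is identically `1`
(`card(G_x·y) = card(G_y·x)` for all vertices `x, y`), then the automorphism group
of the graph (a locally compact group with compact open vertex stabilizers) is
unimodular: any left Haar measure is also right invariant. -/
theorem unimodular_graph_implies_unimodular_group {G V : Type*} [Group G]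
    [TopologicalSpace G] [IsTopologicalGroup G] [LocallyCompactSpace G]
    [MeasurableSpace G] [BorelSpace G]
    (m : Measure G) [m.IsHaarMeasure]
    (Γ : SimpleGraph V) [∀ v, Fintype (Γ.neighborSet v)] (hconn : Γ.Connected)
    [MulAction G V]
    (haut : ∀ (g : G) (x y : V), Γ.Adj (g • x) (g • y) ↔ Γ.Adj x y)
    (hcompact : ∀ x : V, IsCompact (MulAction.stabilizer G x : Set G))
    (hopen : ∀ x : V, IsOpen (MulAction.stabilizer G x : Set G))
    (horbfin : ∀ x y : V, (MulAction.orbit (MulAction.stabilizer G x) y).Finite)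
    (huni : ∀ x y : V,
      Nat.card (MulAction.orbit (MulAction.stabilizer G x) y) =
        Nat.card (MulAction.orbit (MulAction.stabilizer G y) x)) :
    m.IsMulRightInvariant :=
  unimodular_graph_implies_unimodular_group_general m Γ hconn hcompact hopen horbfin huni
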